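/- arXiv:math/0505224 — 5 statements merged into one kernel-verified Lean document; each statement's English description precedes it below -/
import Mathlib

section
/- Let a and b be polynomials of degree at most n with factorizations a(z) = Π_{k=1}^n (1-α_k z) and b(z) = Π_{k=1}^n (1-β_k z). Define a_{-k}(z) = Π_{j=k+1}^n (1-α_j z) and b_{-k}(z) = Π_{j=k+1}^n (1-β_j z) (with a_0 = a, b_0 = b). Then (a(z)b(w) - a(w)b(z))/(z-w) = a(z)b(w) Σ_{k=1}^n (β_k - α_k) · a_{-k}(w)b_{-k}(z) / (a_{-(k-1)}(z) b_{-(k-1)}(w)), i.e., clearing denominators: a(z)b(w) - a(w)b(z) = (z-w) Σ_{k=1}^n (β_k - α_k) · [Π_{j=1}^{k-1}(1-α_j z)] · [Π_{j=k+1}^n (1-β_j z)] · [Π_{j=1}^{k-1}(1-β_j w)] · [Π_{j=k+1}^n (1-α_j w)]. -/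
/-! Replace the factors `(1 - αₖz)(1 - βₖw)` of `a(z)b(w)` one at a time by `(1 - αₖw)(1 - βₖz)`.
This telescopes from `a(z)b(w)` to `a(w)b(z)`, and the `k`-th replacement changes the product by
`(z - w)(βₖ - αₖ)` times the factors left untouched, which is the `k`-th term on the right. -/

open Finset

theorem Finset.prod_range_sub_prod_range {R : Type*} [CommRing R] (f g : ℕ → R) (n : ℕ) :
    ∏ k ∈ range n, f k - ∏ k ∈ range n, g k
      = ∑ k ∈ range n, (∏ j ∈ range k, f j) * (f k - g k) * ∏ j ∈ Ico (k + 1) n, g j := by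
  set mixed : ℕ → R := fun k => (∏ j ∈ range k, f j) * ∏ j ∈ Ico k n, g j
  have step : ∀ k ∈ range n, (∏ j ∈ range k, f j) * (f k - g k) * ∏ j ∈ Ico (k + 1) n, g j
      = mixed (k + 1) - mixed k := by
    intro k hk
    simp only [mixed, prod_range_succ, prod_eq_prod_Ico_succ_bot (mem_range.mp hk)]
    ring
  rw [sum_congr rfl step, sum_range_sub]
  simp [mixed]

/-- Full expansion of the Bezoutian form for `a(z) = ∏ₖ(1-αₖz)`, `b(z) = ∏ₖ(1-βₖz)`:
`a(z)b(w) - a(w)b(z) = (z-w) Σₖ (βₖ-αₖ) ∏_{j<k}(1-αⱼz) ∏_{j>k}(1-βⱼz) ∏_{j<k}(1-βⱼw) ∏_{j>k}(1-αⱼw)`. -/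
theorem bezout_expansion (n : ℕ) (α β : ℕ → ℂ) (z w : ℂ) :
    (∏ k ∈ Finset.range n, (1 - α k * z)) * (∏ k ∈ Finset.range n, (1 - β k * w))
      - (∏ k ∈ Finset.range n, (1 - α k * w)) * (∏ k ∈ Finset.range n, (1 - β k * z))
    = (z - w) * ∑ k ∈ Finset.range n, (β k - α k)
        * (∏ j ∈ Finset.range k, (1 - α j * z))
        * (∏ j ∈ Finset.Ico (k + 1) n, (1 - β j * z))
        * (∏ j ∈ Finset.range k, (1 - β j * w))
        * (∏ j ∈ Finset.Ico (k + 1) n, (1 - α j * w)) := by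
  have factor_change : ∀ a b : ℂ,
      (1 - a * z) * (1 - b * w) - (1 - a * w) * (1 - b * z) = (z - w) * (b - a) :=
    fun _ _ => by ring
  rw [← prod_mul_distrib, ← prod_mul_distrib, prod_range_sub_prod_range, mul_sum]
  refine sum_congr rfl fun k _ => ?_
  rw [factor_change, prod_mul_distrib, prod_mul_distrib]
  ring
end

section
/- Let a, b be polynomials of degree at most n with a common factor (1-φz): a(z) = (1-φz)a_{-1}(z), b(z) = (1-φz)b_{-1}(z). Then the Bezout matrix factors as B(a,b) = U_φ · diag(B(a_{-1},b_{-1}), 0) · U_φ^T, where diag(B(a_{-1},b_{-1}), 0) is the n×n matrix with the (n-1)×(n-1) Bezout matrix B(a_{-1},b_{-1}) in the top left corner and zeros in the last row and column. -/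
/-!
Write `F_M(z, w) = u(z)ᵀ M u(w)` for the generating function of a matrix `M`. Since
`u_{n+1}(z)ᵀ U_φ` restricted to its first `n` entries is `(1 - φz) u_n(z)ᵀ`, the generating
function of `U_φ · diag(B(a₋₁, b₋₁), 0) · U_φᵀ` is `(1 - φz)(1 - φw) F_{B(a₋₁, b₋₁)}(z, w)`;
multiplied by `z - w` this is `(1 - φz)(1 - φw)(a₋₁(z)b₋₁(w) - a₋₁(w)b₋₁(z)) = a(z)b(w) - a(w)b(z)`.
Over an infinite domain a matrix is determined by its generating function off the diagonal
`z = w` (a Vandermonde argument in each variable), so the two matrices agree.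
-/

open Matrix

/-- The `n×n` lower bidiagonal matrix `U_φ` with `1` on the diagonal and `-φ` on the
subdiagonal. -/
def Umat (n : ℕ) (φ : ℂ) : Matrix (Fin n) (Fin n) ℂ :=
  Matrix.of fun i j =>
    if (i : ℕ) = (j : ℕ) then 1 else if (i : ℕ) = (j : ℕ) + 1 then -φ else 0

section

variable {R : Type*} [CommRing R]

def powVec (m : ℕ) (z : R) : Fin m → R := fun i => z ^ (i : ℕ)

def padLast {n : ℕ} (B : Matrix (Fin n) (Fin n) R) : Matrix (Fin (n + 1)) (Fin (n + 1)) R :=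
  Matrix.of fun i j : Fin (n + 1) =>
    if hi : (i : ℕ) < n then
      if hj : (j : ℕ) < n then B ⟨i, hi⟩ ⟨j, hj⟩ else 0
    else 0

theorem sum_sum_pow_mul_mul_pow {m p : ℕ} (M : Matrix (Fin m) (Fin p) R) (z w : R) :
    ∑ i : Fin m, ∑ j : Fin p, z ^ (i : ℕ) * M i j * w ^ (j : ℕ)
      = powVec m z ⬝ᵥ M *ᵥ powVec p w := by
  simp only [dotProduct, mulVec, powVec, Finset.mul_sum, mul_assoc]

theorem eq_zero_of_powVec_dotProduct_eq_zero [IsDomain R] {m : ℕ} {v : Fin m → R}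
    {s : Set R} (hs : s.Infinite) (h : ∀ z ∈ s, powVec m z ⬝ᵥ v = 0) : v = 0 := by
  have : Infinite s := hs.to_subtype
  let f : Fin m ↪ s := Fin.valEmbedding.trans (Infinite.natEmbedding s)
  exact eq_zero_of_forall_index_sum_pow_mul_eq_zero (f := fun j => (f j : R))
    (Subtype.val_injective.comp f.injective) fun j => h _ (f j).2

theorem Matrix.eq_of_forall_ne_powVec_dotProduct_mulVec [IsDomain R] [Infinite R] {m p : ℕ}
    {M N : Matrix (Fin m) (Fin p) R}
    (h : ∀ z w, z ≠ w → powVec m z ⬝ᵥ M *ᵥ powVec p w = powVec m z ⬝ᵥ N *ᵥ powVec p w) :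
    M = N := by
  have hcol : ∀ w, (M - N) *ᵥ powVec p w = 0 := fun w =>
    eq_zero_of_powVec_dotProduct_eq_zero (Set.finite_singleton w).infinite_compl
      fun z hz => by rw [sub_mulVec, dotProduct_sub, h z w hz, sub_self]
  ext i j
  have hrow : (M - N) i = 0 := eq_zero_of_powVec_dotProduct_eq_zero Set.infinite_univ
    fun w _ => by rw [dotProduct_comm]; exact congrFun (hcol w) i
  exact sub_eq_zero.mp (congrFun hrow j)

theorem dotProduct_padLast_mulVec {n : ℕ} (B : Matrix (Fin n) (Fin n) R)
    (x y : Fin (n + 1) → R) :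
    x ⬝ᵥ padLast B *ᵥ y = Fin.init x ⬝ᵥ B *ᵥ Fin.init y := by
  simp [dotProduct, mulVec, Fin.sum_univ_castSucc, padLast, Fin.init]

end

theorem init_powVec_vecMul_Umat (n : ℕ) (φ z : ℂ) :
    Fin.init (powVec (n + 1) z ᵥ* Umat (n + 1) φ) = (1 - φ * z) • powVec n z := by
  ext k
  simp only [Fin.init, vecMul, dotProduct, powVec, Pi.smul_apply, smul_eq_mul]
  rw [Finset.sum_eq_add k.castSucc k.succ Fin.castSucc_lt_succ.ne]
  · simp only [Fin.val_castSucc, Umat, of_apply, ↓reduceIte, mul_one, Fin.val_succ, pow_succ,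
      Nat.add_eq_left, one_ne_zero, mul_neg]
    ring
  · rintro c - ⟨hc, hc'⟩
    have h₁ : (c : ℕ) ≠ k := fun h => hc (Fin.ext h)
    have h₂ : (c : ℕ) ≠ k + 1 := fun h => hc' (Fin.ext h)
    simp [Umat, h₁, h₂]
  · simp
  · simp

theorem powVec_dotProduct_Umat_mul_padLast_mul_transpose_mulVec (n : ℕ) (φ z w : ℂ)
    (B : Matrix (Fin n) (Fin n) ℂ) :
    powVec (n + 1) z ⬝ᵥ (Umat (n + 1) φ * padLast B * (Umat (n + 1) φ)ᵀ) *ᵥ powVec (n + 1) w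
      = (1 - φ * z) * (1 - φ * w) * (powVec n z ⬝ᵥ B *ᵥ powVec n w) := by
  rw [← mulVec_mulVec, ← mulVec_mulVec, dotProduct_mulVec, mulVec_transpose,
    dotProduct_padLast_mulVec, init_powVec_vecMul_Umat, init_powVec_vecMul_Umat,
    mulVec_smul, dotProduct_smul, smul_dotProduct, smul_eq_mul, smul_eq_mul]
  ring

theorem bezout_common_factor_general (n : ℕ) (a b a₁ b₁ : Polynomial ℂ) (φ : ℂ)
    (hfa : a = (1 - Polynomial.C φ * Polynomial.X) * a₁)
    (hfb : b = (1 - Polynomial.C φ * Polynomial.X) * b₁)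
    (Bab : Matrix (Fin (n + 1)) (Fin (n + 1)) ℂ) (Bsub : Matrix (Fin n) (Fin n) ℂ)
    (hBab : ∀ z w : ℂ, a.eval z * b.eval w - a.eval w * b.eval z
      = (z - w) * ∑ i : Fin (n + 1), ∑ j : Fin (n + 1),
          z ^ (i : ℕ) * Bab i j * w ^ (j : ℕ))
    (hBsub : ∀ z w : ℂ, a₁.eval z * b₁.eval w - a₁.eval w * b₁.eval z
      = (z - w) * ∑ i : Fin n, ∑ j : Fin n, z ^ (i : ℕ) * Bsub i j * w ^ (j : ℕ)) :
    Bab = Umat (n + 1) φ *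
      (Matrix.of fun i j : Fin (n + 1) =>
        if hi : (i : ℕ) < n then
          if hj : (j : ℕ) < n then Bsub ⟨i, hi⟩ ⟨j, hj⟩ else 0
        else 0) * (Umat (n + 1) φ)ᵀ := by
  change Bab = Umat (n + 1) φ * padLast Bsub * (Umat (n + 1) φ)ᵀ
  simp only [sum_sum_pow_mul_mul_pow] at hBab hBsub
  refine Matrix.eq_of_forall_ne_powVec_dotProduct_mulVec fun z w hzw => ?_
  rw [powVec_dotProduct_Umat_mul_padLast_mul_transpose_mulVec]
  refine mul_left_cancel₀ (sub_ne_zero.mpr hzw) ?_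
  calc (z - w) * (powVec (n + 1) z ⬝ᵥ Bab *ᵥ powVec (n + 1) w)
      = a.eval z * b.eval w - a.eval w * b.eval z := (hBab z w).symm
    _ = (1 - φ * z) * (1 - φ * w) * (a₁.eval z * b₁.eval w - a₁.eval w * b₁.eval z) := by
      simp only [hfa, hfb, Polynomial.eval_mul, Polynomial.eval_sub, Polynomial.eval_one,
        Polynomial.eval_C, Polynomial.eval_X]
      ring
    _ = (z - w) * ((1 - φ * z) * (1 - φ * w) * (powVec n z ⬝ᵥ Bsub *ᵥ powVec n w)) := by
      rw [hBsub]
      ring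

/-- If `a` and `b` have the common factor `(1-φz)`, `a = (1-φz)a₁`, `b = (1-φz)b₁`,
then the Bezout matrix factors as
`B(a,b) = U_φ · diag(B(a₁,b₁), 0) · U_φᵀ`.
Here the Bezout matrices are characterized by the defining relation
`a(z)b(w) - a(w)b(z) = (z-w) u(z)ᵀ B u(w)`. -/
theorem bezout_common_factor (n : ℕ) (a b a₁ b₁ : Polynomial ℂ) (φ : ℂ)
    (ha : a.natDegree ≤ n + 1) (hb : b.natDegree ≤ n + 1)
    (ha₁ : a₁.natDegree ≤ n) (hb₁ : b₁.natDegree ≤ n)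
    (hfa : a = (1 - Polynomial.C φ * Polynomial.X) * a₁)
    (hfb : b = (1 - Polynomial.C φ * Polynomial.X) * b₁)
    (Bab : Matrix (Fin (n + 1)) (Fin (n + 1)) ℂ) (Bsub : Matrix (Fin n) (Fin n) ℂ)
    (hBab : ∀ z w : ℂ, a.eval z * b.eval w - a.eval w * b.eval z
      = (z - w) * ∑ i : Fin (n + 1), ∑ j : Fin (n + 1),
          z ^ (i : ℕ) * Bab i j * w ^ (j : ℕ))
    (hBsub : ∀ z w : ℂ, a₁.eval z * b₁.eval w - a₁.eval w * b₁.eval z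
      = (z - w) * ∑ i : Fin n, ∑ j : Fin n, z ^ (i : ℕ) * Bsub i j * w ^ (j : ℕ)) :
    Bab = Umat (n + 1) φ *
      (Matrix.of fun i j : Fin (n + 1) =>
        if hi : (i : ℕ) < n then
          if hj : (j : ℕ) < n then Bsub ⟨i, hi⟩ ⟨j, hj⟩ else 0
        else 0) * (Umat (n + 1) φ)ᵀ :=
  bezout_common_factor_general n a b a₁ b₁ φ hfa hfb Bab Bsub hBab hBsub
end

section
/- The identity u_n(z)^T · U_{α_1} ⋯ U_{α_{k-1}} U_{β_{k+1}} ⋯ U_{β_n} · e = Π_{j=1}^{k-1}(1-α_j z) · Π_{j=k+1}^n (1-β_j z) holds, where e is the first standard basis vector of R^n and u_n(z) = (1, z, ..., z^{n-1})^T. -/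
open Matrix

/-!
Identify `w ∈ ℂⁿ` with the polynomial `∑ wᵢ Xⁱ`, so that `u(z) ⬝ᵥ w` is its value at `z`.
Then `U_φ` is multiplication by `1 - φX` followed by truncation modulo `Xⁿ`; starting from
`e = 1`, the product of fewer than `n` such factors never reaches degree `n`, so no truncation
happens and the value at `z` is the product of the `1 - φz`.
-/

namespace Umat

variable {n : ℕ}

lemma mulVec_apply_eq_zero_of_le {m : ℕ} {w : Fin n → ℂ} (hw : ∀ i : Fin n, m ≤ i → w i = 0)
    (φ : ℂ) (i : Fin n) (hi : m + 1 ≤ i) : (Umat n φ *ᵥ w) i = 0 := by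
  rw [mulVec, dotProduct]
  refine Finset.sum_eq_zero fun j _ => ?_
  by_cases hj : (i : ℕ) = j ∨ (i : ℕ) = j + 1
  · rw [hw j (by omega), mul_zero]
  · simp only [Umat, of_apply, not_or] at hj ⊢
    simp [hj.1, hj.2]

lemma prod_mulVec_apply_eq_zero_of_le {m : ℕ} {w : Fin n → ℂ} (hw : ∀ i : Fin n, m ≤ i → w i = 0)
    (l : List ℂ) (i : Fin n) (hi : m + l.length ≤ i) : ((l.map (Umat n)).prod *ᵥ w) i = 0 := by
  induction l generalizing i with
  | nil => simpa using hw i hi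
  | cons φ l ih =>
    rw [List.map_cons, List.prod_cons, ← mulVec_mulVec]
    exact mulVec_apply_eq_zero_of_le ih φ i (by simpa [add_assoc] using hi)

lemma vecMul_apply (z φ : ℂ) (j : Fin n) :
    ((fun i : Fin n => z ^ (i : ℕ)) ᵥ* Umat n φ) j =
      z ^ (j : ℕ) - if (j : ℕ) + 1 < n then φ * z ^ ((j : ℕ) + 1) else 0 := by
  have hterm : ∀ i : ℕ, z ^ i * (if i = j then 1 else if i = j + 1 then -φ else 0) =
      (if (j : ℕ) = i then z ^ (j : ℕ) else 0) -
        if (j : ℕ) + 1 = i then φ * z ^ ((j : ℕ) + 1) else 0 := by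
    intro i
    by_cases h₁ : i = j
    · simp [h₁]
    · by_cases h₂ : i = j + 1
      · simp [h₂, mul_comm]
      · simp [h₁, h₂, Ne.symm h₁, Ne.symm h₂]
  simp only [vecMul, dotProduct, Umat, of_apply]
  rw [Fin.sum_univ_eq_sum_range
      (fun i => z ^ i * if i = j then 1 else if i = (j : ℕ) + 1 then -φ else 0),
    Finset.sum_congr rfl fun i _ => hterm i, Finset.sum_sub_distrib, Finset.sum_ite_eq,
    Finset.sum_ite_eq]
  simp

lemma powers_dotProduct_mulVec (z φ : ℂ) {w : Fin n → ℂ}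
    (hw : ∀ i : Fin n, n ≤ (i : ℕ) + 1 → w i = 0) :
    (fun i : Fin n => z ^ (i : ℕ)) ⬝ᵥ (Umat n φ *ᵥ w) =
      (1 - φ * z) * ((fun i : Fin n => z ^ (i : ℕ)) ⬝ᵥ w) := by
  rw [dotProduct_mulVec, dotProduct, dotProduct, Finset.mul_sum]
  refine Finset.sum_congr rfl fun j _ => ?_
  rw [vecMul_apply]
  by_cases hj : (j : ℕ) + 1 < n
  · rw [if_pos hj]; ring
  · rw [hw j (by omega)]; ring

lemma powers_dotProduct_prod_mulVec (z : ℂ) {m : ℕ} {w : Fin n → ℂ}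
    (hw : ∀ i : Fin n, m ≤ i → w i = 0) (l : List ℂ) (hl : m + l.length ≤ n) :
    (fun i : Fin n => z ^ (i : ℕ)) ⬝ᵥ ((l.map (Umat n)).prod *ᵥ w) =
      (l.map fun φ => 1 - φ * z).prod * ((fun i : Fin n => z ^ (i : ℕ)) ⬝ᵥ w) := by
  induction l with
  | nil => simp
  | cons φ l ih =>
    simp only [List.length_cons] at hl
    rw [List.map_cons, List.prod_cons, ← mulVec_mulVec,
      powers_dotProduct_mulVec z φ fun i hi => prod_mulVec_apply_eq_zero_of_le hw l i (by omega),
      ih (by omega), List.map_cons, List.prod_cons, mul_assoc]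

end Umat

lemma List.prod_map_range_eq_prod_range {M : Type*} [CommMonoid M] (f : ℕ → M) (m : ℕ) :
    ((List.range m).map f).prod = ∏ j ∈ Finset.range m, f j := by
  simp [Finset.prod_eq_multiset_prod, Finset.range_val, Multiset.range]

lemma Finset.prod_Icc_succ_eq_prod_range {M : Type*} [CommMonoid M] (f : ℕ → M) (a b : ℕ) :
    ∏ j ∈ Finset.Icc (a + 1) b, f j = ∏ j ∈ Finset.range (b - a), f (a + 1 + j) := by
  rw [← Finset.Ico_add_one_right_eq_Icc, Finset.prod_Ico_eq_prod_range,
    show b + 1 - (a + 1) = b - a by omega]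

/-- The key identity
`uₙ(z)ᵀ U_{α₁} ⋯ U_{α_{k-1}} U_{β_{k+1}} ⋯ U_{β_n} e = ∏_{j=1}^{k-1}(1-αⱼz) ∏_{j=k+1}^{n}(1-βⱼz)`,
where `e` is the first standard basis vector of `ℝⁿ` and `uₙ(z) = (1,z,…,z^{n-1})ᵀ`. -/
theorem uT_Uprod_e (n k : ℕ) (hk1 : 1 ≤ k) (hkn : k ≤ n) (α β : ℕ → ℂ) (z : ℂ) :
    dotProduct (fun i : Fin n => z ^ (i : ℕ))
      (((((List.range (k - 1)).map fun j => Umat n (α (j + 1))).prod *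
          ((List.range (n - k)).map fun j => Umat n (β (k + 1 + j))).prod).mulVec
        (fun i : Fin n => if (i : ℕ) = 0 then 1 else 0)))
    = (∏ j ∈ Finset.Icc 1 (k - 1), (1 - α j * z)) *
        ∏ j ∈ Finset.Icc (k + 1) n, (1 - β j * z) := by
  set u : Fin n → ℂ := fun i => z ^ (i : ℕ)
  set e : Fin n → ℂ := fun i => if (i : ℕ) = 0 then 1 else 0
  set l := (List.range (k - 1)).map (fun j => α (j + 1)) ++
    (List.range (n - k)).map fun j => β (k + 1 + j)
  have hprod : (l.map (Umat n)).prod =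
      ((List.range (k - 1)).map fun j => Umat n (α (j + 1))).prod *
        ((List.range (n - k)).map fun j => Umat n (β (k + 1 + j))).prod := by
    simp [l, List.prod_append, Function.comp_def]
  have he_supp : ∀ i : Fin n, 1 ≤ (i : ℕ) → e i = 0 := fun i hi => by
    simp [e, Nat.one_le_iff_ne_zero.mp hi]
  have hue : u ⬝ᵥ e = 1 := by
    rw [dotProduct, Finset.sum_eq_single ⟨0, by omega⟩]
    · simp [u, e]
    · intro i _ hi
      rw [he_supp i (Nat.one_le_iff_ne_zero.mpr fun h => hi (Fin.ext h)), mul_zero]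
    · simp
  have hlen : l.length = k - 1 + (n - k) := by simp [l]
  rw [← hprod, Umat.powers_dotProduct_prod_mulVec z he_supp l (by omega), hue, mul_one,
    ← zero_add 1, Finset.prod_Icc_succ_eq_prod_range, Finset.prod_Icc_succ_eq_prod_range]
  simp [l, List.prod_append, Function.comp_def, List.prod_map_range_eq_prod_range, add_comm]
end

section
/- Let F_a = J - e_p a^T and F_c = J - e_q c^T be the companion-type matrices of â and ĉ, F = diag(F_a, F_c), and B = (e_p^T, -e_q^T)^T. If â and ĉ have no common zeros, then the pair (F, B) is controllable, i.e., the controllability matrix (B, FB, ..., F^{p+q-1}B) has full rank p+q. Conversely, if â and ĉ have a common zero, then (F, B) is not controllable. -/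
/-!
By the Popov–Belevitch–Hautus test, `(F, B)` fails to be controllable exactly when some
nonzero row vector `w` satisfies `w F = λ w` and `w B = 0`. For a companion block `J - e bᵀ`
the equation `w F = λ w` is the recurrence `w_{j+1} = λ w_j + w_0 b_{j+1}`, so `w = w_0 h_b(λ)`
with `h_b(λ) = (1, λ + b₁, λ² + b₁λ + b₂, …)` the Horner truncations of `b̂` at `λ`, and the
last coordinate forces `w_0 b̂(λ) = 0`. For `F = diag(F_a, F_c)` a left eigenvector is
therefore `(α h_a(λ), γ h_c(λ))` with `α â(λ) = γ ĉ(λ) = 0`, and `w B = α - γ`. Hence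
`w B = 0` with `w ≠ 0` forces `α = γ ≠ 0`, i.e. `λ` is a common zero; conversely a common
zero gives the eigenvector with `α = γ = 1`.
-/

open Matrix

/-- The block diagonal matrix `F = diag(J - e_p aᵀ, J - e_q cᵀ)` built from the
coefficient vectors `a = (a₁,…,a_p)` and `c = (c₁,…,c_q)` of the monic polynomials
`â` and `ĉ` (given as functions `ℕ → ℂ`, where `a k` denotes `a_k`). -/
def blockF (p q : ℕ) (a c : ℕ → ℂ) : Matrix (Fin (p + q)) (Fin (p + q)) ℂ :=
  Matrix.of fun i j =>
    if (i : ℕ) < p ∧ (j : ℕ) < p then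
      (if (i : ℕ) = (j : ℕ) + 1 then 1 else 0) - (if (i : ℕ) = 0 then a ((j : ℕ) + 1) else 0)
    else if p ≤ (i : ℕ) ∧ p ≤ (j : ℕ) then
      (if (i : ℕ) = (j : ℕ) + 1 then 1 else 0) -
        (if (i : ℕ) = p then c ((j : ℕ) - p + 1) else 0)
    else 0

/-- The input vector `B = (e_pᵀ, -e_qᵀ)ᵀ`. -/
def vecB (p q : ℕ) : Fin (p + q) → ℂ := fun i =>
  if (i : ℕ) = 0 then 1 else if (i : ℕ) = p then -1 else 0

section Krylov

open Polynomial in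
theorem dotProduct_pow_mulVec_eq_zero {R n : Type*} [CommRing R] [Nontrivial R] [Fintype n]
    [DecidableEq n] (M : Matrix n n R) (b u : n → R)
    (h : ∀ j < Fintype.card n, u ⬝ᵥ (M ^ j *ᵥ b) = 0) (k : ℕ) : u ⬝ᵥ (M ^ k *ᵥ b) = 0 := by
  cases isEmpty_or_nonempty n
  · simp [dotProduct]
  set r := X ^ k %ₘ M.charpoly
  have hr : M ^ k = aeval M r := by
    rw [aeval_modByMonic_eq_self_of_root M.aeval_self_charpoly, map_pow, aeval_X]
  have hdeg : r.natDegree < Fintype.card n := by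
    rw [← M.charpoly_natDegree_eq_dim]
    refine natDegree_modByMonic_lt _ M.charpoly_monic fun h1 => Fintype.card_ne_zero (α := n) ?_
    simpa [h1] using M.charpoly_natDegree_eq_dim.symm
  rw [hr, aeval_eq_sum_range' hdeg, sum_mulVec, dotProduct_sum]
  refine Finset.sum_eq_zero fun j hj => ?_
  rw [smul_mulVec, dotProduct_smul, h j (Finset.mem_range.1 hj), smul_zero]

theorem rank_eq_card_iff_forall_vecMul_eq_zero {K n : Type*} [Field K] [Fintype n]
    [DecidableEq n] (A : Matrix n n K) :
    A.rank = Fintype.card n ↔ ∀ w, w ᵥ* A = 0 → w = 0 := by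
  rw [rank_eq_finrank_span_row, ← Set.finrank, eq_comm,
    ← linearIndependent_iff_card_eq_finrank_span, linearIndependent_rows_iff_isUnit,
    ← vecMul_injective_iff_isUnit, ← coe_vecMulLinear, injective_iff_map_eq_zero]
  rfl

theorem vecMul_pow_of_vecMul_eq_smul {R n : Type*} [CommSemiring R] [Fintype n] [DecidableEq n]
    {M : Matrix n n R} {w : n → R} {x : R} (h : w ᵥ* M = x • w) (k : ℕ) :
    w ᵥ* M ^ k = x ^ k • w := by
  induction k with
  | zero => simp
  | succ k ih => rw [pow_succ, ← vecMul_vecMul, ih, smul_vecMul, h, smul_smul, ← pow_succ]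

variable {n : ℕ}

def krylovMatrix {R : Type*} [Semiring R] (M : Matrix (Fin n) (Fin n) R) (b : Fin n → R) :
    Matrix (Fin n) (Fin n) R :=
  of fun i j => (M ^ (j : ℕ) *ᵥ b) i

theorem vecMul_krylovMatrix_apply {R : Type*} [CommSemiring R] (M : Matrix (Fin n) (Fin n) R)
    (b w : Fin n → R) (j : Fin n) :
    (w ᵥ* krylovMatrix M b) j = w ⬝ᵥ (M ^ (j : ℕ) *ᵥ b) :=
  rfl

variable {K : Type*} [Field K] (M : Matrix (Fin n) (Fin n) K) (b : Fin n → K)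

/-- The annihilator of the Krylov space is invariant under `w ↦ w M`, so over an algebraically
closed field it contains a left eigenvector of `M`. -/
theorem exists_left_eigenvector_of_vecMul_krylovMatrix_eq_zero [IsAlgClosed K] {w : Fin n → K}
    (hw0 : w ≠ 0) (hw : w ᵥ* krylovMatrix M b = 0) :
    ∃ (x : K) (v : Fin n → K), v ≠ 0 ∧ v ᵥ* M = x • v ∧ v ⬝ᵥ b = 0 := by
  set W := LinearMap.ker (vecMulLinear (krylovMatrix M b))
  have hmem : ∀ u, u ∈ W ↔ ∀ k : ℕ, u ⬝ᵥ (M ^ k *ᵥ b) = 0 := by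
    refine fun u => ⟨fun hu k => dotProduct_pow_mulVec_eq_zero M b u (fun j hj => ?_) k,
      fun hu => LinearMap.mem_ker.2 (funext fun j => hu j)⟩
    rw [Fintype.card_fin] at hj
    exact congrFun (LinearMap.mem_ker.1 hu) ⟨j, hj⟩
  have hW : ∀ u ∈ W, vecMulLinear M u ∈ W := by
    intro u hu
    rw [hmem] at hu ⊢
    intro k
    rw [vecMulLinear_apply, ← dotProduct_mulVec, mulVec_mulVec, ← pow_succ', hu]
  have : Nontrivial W := nontrivial_of_ne ⟨w, hw⟩ 0 (by simpa [Subtype.ext_iff] using hw0)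
  obtain ⟨x, hx⟩ := Module.End.exists_eigenvalue ((vecMulLinear M).restrict hW)
  obtain ⟨⟨v, hvW⟩, hv, hv0⟩ := hx.exists_hasEigenvector
  refine ⟨x, v, fun hv' => hv0 (Subtype.ext hv'), ?_, by simpa using (hmem v).1 hvW 0⟩
  simpa [Subtype.ext_iff] using Module.End.mem_eigenspace_iff.1 hv

theorem rank_krylovMatrix_eq_iff [IsAlgClosed K] :
    (krylovMatrix M b).rank = n ↔
      ¬∃ (x : K) (w : Fin n → K), w ≠ 0 ∧ w ᵥ* M = x • w ∧ w ⬝ᵥ b = 0 := by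
  have hrank := rank_eq_card_iff_forall_vecMul_eq_zero (krylovMatrix M b)
  rw [Fintype.card_fin] at hrank
  rw [hrank]
  constructor
  · rintro h ⟨x, w, hw0, hw, hwb⟩
    refine hw0 (h w (funext fun j => ?_))
    rw [vecMul_krylovMatrix_apply, dotProduct_mulVec, vecMul_pow_of_vecMul_eq_smul hw,
      smul_dotProduct, hwb, smul_zero]
    rfl
  · intro h w hw
    by_contra hw0
    exact h (exists_left_eigenvector_of_vecMul_krylovMatrix_eq_zero M b hw0 hw)

end Krylov

theorem Fin.sum_ite_val_eq {M : Type*} [AddCommMonoid M] {m : ℕ} (k : ℕ) (f : Fin m → M) :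
    (∑ i : Fin m, if (i : ℕ) = k then f i else 0) = if h : k < m then f ⟨k, h⟩ else 0 := by
  split_ifs with h
  · simp_rw [← Fin.ext_iff (b := ⟨k, h⟩)]
    simp
  · exact Finset.sum_eq_zero fun i _ => if_neg (by omega)

section Companion

variable {R : Type*} [CommRing R]

def monicEval (b : ℕ → R) (m : ℕ) (x : R) : R :=
  x ^ m + ∑ k ∈ Finset.range m, b (k + 1) * x ^ (m - 1 - k)

@[simp]
theorem monicEval_zero (b : ℕ → R) (x : R) : monicEval b 0 x = 1 := by
  simp [monicEval]

theorem monicEval_succ (b : ℕ → R) (m : ℕ) (x : R) :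
    monicEval b (m + 1) x = x * monicEval b m x + b (m + 1) := by
  simp only [monicEval, Finset.sum_range_succ, Nat.add_sub_cancel, Nat.sub_self, pow_zero, mul_one,
    mul_add, Finset.mul_sum]
  have hsum : ∀ k ∈ Finset.range m, b (k + 1) * x ^ (m - k) = x * (b (k + 1) * x ^ (m - 1 - k)) :=
    fun k hk => by
      rw [show m - k = m - 1 - k + 1 by have := Finset.mem_range.1 hk; omega, pow_succ]
      ring
  rw [Finset.sum_congr rfl hsum, pow_succ']
  ring

def hornerVec (b : ℕ → R) (m : ℕ) (x : R) : Fin m → R := fun j => monicEval b j x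

def companion (b : ℕ → R) (m : ℕ) : Matrix (Fin m) (Fin m) R :=
  of fun i j => (if (i : ℕ) = j + 1 then 1 else 0) - if (i : ℕ) = 0 then b (j + 1) else 0

theorem vecMul_companion_apply (b : ℕ → R) {m : ℕ} (w : Fin m → R) (j : Fin m) :
    (w ᵥ* companion b m) j =
      (if h : (j : ℕ) + 1 < m then w ⟨j + 1, h⟩ else 0) - w ⟨0, j.pos⟩ * b (j + 1) := by
  simp only [vecMul, dotProduct, companion, of_apply, mul_sub, Finset.sum_sub_distrib, mul_ite,
    mul_one, mul_zero]
  rw [Fin.sum_ite_val_eq, Fin.sum_ite_val_eq, dif_pos j.pos]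

theorem vecMul_companion_eq_smul_iff (b : ℕ → R) {m : ℕ} (w : Fin m → R) (x : R) :
    w ᵥ* companion b m = x • w ↔ ∃ α : R, w = α • hornerVec b m x ∧ α * monicEval b m x = 0 := by
  cases m with
  | zero => exact iff_of_true (Subsingleton.elim _ _) ⟨0, Subsingleton.elim _ _, zero_mul _⟩
  | succ n =>
    have hcoord : ∀ j : Fin (n + 1), (w ᵥ* companion b (n + 1)) j = x * w j ↔
        (if h : (j : ℕ) + 1 < n + 1 then w ⟨j + 1, h⟩ else 0) = x * w j + w 0 * b (j + 1) := by
      intro j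
      rw [vecMul_companion_apply, sub_eq_iff_eq_add]
      rfl
    simp only [funext_iff, Pi.smul_apply, smul_eq_mul, hcoord, hornerVec]
    constructor
    · intro h
      have hw : ∀ j (hj : j < n + 1), w ⟨j, hj⟩ = w 0 * monicEval b j x := by
        intro j
        induction j with
        | zero => simp
        | succ j ih =>
          intro hj
          have := h ⟨j, by omega⟩
          rw [dif_pos hj] at this
          rw [this, ih, monicEval_succ]
          ring
      refine ⟨w 0, fun j => hw j j.2, ?_⟩
      have := h ⟨n, by omega⟩
      rw [dif_neg (lt_irrefl _), hw n (by omega)] at this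
      rw [monicEval_succ]
      linear_combination -this
    · rintro ⟨α, hw, hα⟩ j
      rw [monicEval_succ] at hα
      split_ifs with hj
      · simp only [hw, monicEval_succ, Fin.val_zero, monicEval_zero]
        ring
      · simp only [hw, Fin.val_zero, monicEval_zero, show (j : ℕ) = n by omega]
        linear_combination -hα

end Companion

theorem vecMul_fromBlocks_zero_eq_smul_iff {R n o : Type*} [CommSemiring R] [Fintype n]
    [Fintype o] (A : Matrix n n R) (D : Matrix o o R) (v : n ⊕ o → R) (x : R) :
    v ᵥ* fromBlocks A 0 0 D = x • v ↔
      (v ∘ Sum.inl) ᵥ* A = x • (v ∘ Sum.inl) ∧ (v ∘ Sum.inr) ᵥ* D = x • (v ∘ Sum.inr) := by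
  simp only [vecMul_fromBlocks, vecMul_zero, add_zero, zero_add, funext_iff, Sum.forall,
    Sum.elim_inl, Sum.elim_inr, Pi.smul_apply, Function.comp_apply]

theorem blockF_eq_reindex (p q : ℕ) (a c : ℕ → ℂ) :
    blockF p q a c =
      reindex finSumFinEquiv finSumFinEquiv (fromBlocks (companion a p) 0 0 (companion c q)) := by
  ext i j
  refine Fin.addCases (fun i => ?_) (fun i => ?_) i <;>
    refine Fin.addCases (fun j => ?_) (fun j => ?_) j <;>
    simp [blockF, companion, add_assoc]

theorem vecMul_blockF_eq_smul_iff {p q : ℕ} (a c : ℕ → ℂ) (w : Fin (p + q) → ℂ) (x : ℂ) :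
    w ᵥ* blockF p q a c = x • w ↔
      (w ∘ Fin.castAdd q) ᵥ* companion a p = x • (w ∘ Fin.castAdd q) ∧
        (w ∘ Fin.natAdd p) ᵥ* companion c q = x • (w ∘ Fin.natAdd p) := by
  rw [blockF_eq_reindex, reindex_apply, submatrix_vecMul_equiv, Equiv.symm_symm,
    Equiv.comp_symm_eq]
  exact vecMul_fromBlocks_zero_eq_smul_iff _ _ (w ∘ finSumFinEquiv) x

theorem dotProduct_vecB {p q : ℕ} (hp : 0 < p) (hq : 0 < q) (w : Fin (p + q) → ℂ) :
    w ⬝ᵥ vecB p q = w (Fin.castAdd q ⟨0, hp⟩) - w (Fin.natAdd p ⟨0, hq⟩) := by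
  have hB : vecB p q = fun i : Fin (p + q) =>
      (if (i : ℕ) = 0 then (1 : ℂ) else 0) - if (i : ℕ) = p then 1 else 0 := by
    funext i
    simp only [vecB]
    split_ifs <;> first | omega | ring
  simp only [hB, dotProduct, mul_sub, mul_ite, mul_one, mul_zero, Finset.sum_sub_distrib,
    Fin.sum_ite_val_eq, dif_pos (Nat.add_pos_left hp q), dif_pos (Nat.lt_add_of_pos_right hq)]
  rfl

theorem exists_left_eigenvector_blockF_iff {p q : ℕ} (hp : 0 < p) (hq : 0 < q) (a c : ℕ → ℂ)
    (x : ℂ) :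
    (∃ w : Fin (p + q) → ℂ, w ≠ 0 ∧ w ᵥ* blockF p q a c = x • w ∧ w ⬝ᵥ vecB p q = 0) ↔
      monicEval a p x = 0 ∧ monicEval c q x = 0 := by
  simp only [vecMul_blockF_eq_smul_iff, vecMul_companion_eq_smul_iff, dotProduct_vecB hp hq]
  constructor
  · rintro ⟨w, hw0, ⟨⟨α, hwa, hα⟩, ⟨γ, hwc, hγ⟩⟩, hwB⟩
    have hαγ : α = γ := by
      have h0a : w (Fin.castAdd q ⟨0, hp⟩) = α := by
        simpa [hornerVec] using congrFun hwa ⟨0, hp⟩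
      have h0c : w (Fin.natAdd p ⟨0, hq⟩) = γ := by
        simpa [hornerVec] using congrFun hwc ⟨0, hq⟩
      rwa [h0a, h0c, sub_eq_zero] at hwB
    subst hαγ
    have hα0 : α ≠ 0 := by
      rintro rfl
      refine hw0 (funext fun i => Fin.addCases (fun i => ?_) (fun i => ?_) i)
      · simpa using congrFun hwa i
      · simpa using congrFun hwc i
    exact ⟨(mul_eq_zero.1 hα).resolve_left hα0, (mul_eq_zero.1 hγ).resolve_left hα0⟩
  · rintro ⟨ha, hc⟩
    refine ⟨Fin.append (hornerVec a p x) (hornerVec c q x), fun h => ?_,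
      ⟨⟨1, ?_, by rw [ha, mul_zero]⟩, ⟨1, ?_, by rw [hc, mul_zero]⟩⟩, ?_⟩
    · have := congrFun h (Fin.castAdd q ⟨0, hp⟩)
      rw [Fin.append_left] at this
      simp [hornerVec] at this
    · funext i; simp
    · funext i; simp
    · rw [Fin.append_left, Fin.append_right]
      simp [hornerVec]

/-- The pair `(F, B)` is controllable (the controllability matrix
`(B, FB, …, F^{p+q-1}B)` has full rank `p+q`) if and only if the monic polynomials
`â(z) = z^p + a₁z^{p-1} + ⋯ + a_p` and `ĉ(z) = z^q + c₁z^{q-1} + ⋯ + c_q` have no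
common zeros. -/
theorem controllable_iff_no_common_zero (p q : ℕ) (hp : 0 < p) (hq : 0 < q)
    (a c : ℕ → ℂ) :
    (∀ lam : ℂ, ¬(lam ^ p + ∑ k ∈ Finset.range p, a (k + 1) * lam ^ (p - 1 - k) = 0 ∧
        lam ^ q + ∑ k ∈ Finset.range q, c (k + 1) * lam ^ (q - 1 - k) = 0)) ↔
      (Matrix.of fun (i j : Fin (p + q)) =>
          ((blockF p q a c ^ (j : ℕ)).mulVec (vecB p q)) i).rank = p + q := by
  change (∀ x, ¬(monicEval a p x = 0 ∧ monicEval c q x = 0)) ↔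
    (krylovMatrix (blockF p q a c) (vecB p q)).rank = p + q
  rw [rank_krylovMatrix_eq_iff]
  simp only [exists_left_eigenvector_blockF_iff hp hq, not_exists]
end

section
/- Let c(z) = 1 + c_1 z + ... + c_n z^n with Hankel matrix S(ĉ) ((i,j)-entry c_{2n-i-j}, c_0 = 1), J the forward shift, e the first basis vector, c = (c_1,...,c_n)^T, and P the flip matrix. Then P S(ĉ) P (J - e c^T) = (P J P - c e^T) P S(ĉ) P, and both equal the matrix whose first n-1 columns contain the reversed Hankel pattern of (1, c_1, ..., c_{n-2}) and whose last column is -c_n times the last basis vector (explicitly: the n×n matrix M with M_{ij} = c_{i+j-n} for j ≤ n-1 where c_0=1 and c_k=0 for k<0, M_{in} = 0 for i < n, and M_{nn} = -c_n). -/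
/-!
Conjugating by the flip `P` reverses rows and columns, so `A = P S(ĉ) P` is the Hankel matrix
`A_{ij} = c_{i+j-(n-1)}` (0-based), which is symmetric, and `P J P = Jᵀ`. Hence the right-hand
side `(Jᵀ - c eᵀ) A` is the transpose of `A (J - e cᵀ)`, and it suffices to compute the latter
entrywise: since `c₀ = 1`, the first column of `A` is the last basis vector, and the result is
the symmetric matrix `shiftedHankel n c`.
-/

open Matrix

/-- The `n×n` Hankel matrix `S(ĉ)` with first row `(c_{n-1}, …, c₁, c₀)` and zeros
below the anti-diagonal. -/
def Shat (n : ℕ) (c : ℕ → ℂ) : Matrix (Fin n) (Fin n) ℂ :=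
  Matrix.of fun i j =>
    if (i : ℕ) + (j : ℕ) ≤ n - 1 then c (n - 1 - (i : ℕ) - (j : ℕ)) else 0

/-- The forward shift matrix `J` (`J_{ij} = 1` iff `i = j+1`). -/
def shiftJ (n : ℕ) : Matrix (Fin n) (Fin n) ℂ :=
  Matrix.of fun i j => if (i : ℕ) = (j : ℕ) + 1 then 1 else 0

/-- The flip (anti-diagonal identity) matrix `P`. -/
def flipP (n : ℕ) : Matrix (Fin n) (Fin n) ℂ :=
  Matrix.of fun i j => if (i : ℕ) + (j : ℕ) = n - 1 then 1 else 0

lemma submatrix_one_id_revPerm {R : Type*} [Zero R] [One R] (n : ℕ) :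
    (1 : Matrix (Fin n) (Fin n) R).submatrix id Fin.revPerm =
      (1 : Matrix (Fin n) (Fin n) R).submatrix Fin.revPerm id := by
  ext i j
  simp only [submatrix_apply, id, Fin.revPerm_apply, one_apply, Fin.rev_eq_iff]

lemma flipP_eq_submatrix_one (n : ℕ) :
    flipP n = (1 : Matrix (Fin n) (Fin n) ℂ).submatrix id Fin.revPerm := by
  ext i j
  simp only [flipP, of_apply, submatrix_apply, id, Fin.revPerm_apply, one_apply, Fin.ext_iff,
    Fin.val_rev]
  have := j.isLt
  congr 1
  exact propext (by omega)

lemma flipP_mul_mul_flipP {n : ℕ} (M : Matrix (Fin n) (Fin n) ℂ) :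
    flipP n * M * flipP n = M.submatrix Fin.rev Fin.rev := by
  rw [flipP_eq_submatrix_one, one_submatrix_mul, submatrix_one_id_revPerm, mul_submatrix_one,
    submatrix_submatrix]
  rfl

lemma flipP_mul_shiftJ_mul_flipP (n : ℕ) : flipP n * shiftJ n * flipP n = (shiftJ n)ᵀ := by
  ext i j
  simp only [flipP_mul_mul_flipP, submatrix_apply, transpose_apply, shiftJ, of_apply, Fin.val_rev]
  have := i.isLt
  have := j.isLt
  congr 1
  exact propext (by omega)

lemma flipP_mul_Shat_mul_flipP_apply {n : ℕ} (c : ℕ → ℂ) (i j : Fin n) :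
    (flipP n * Shat n c * flipP n) i j =
      if n - 1 ≤ (i : ℕ) + j then c ((i : ℕ) + j - (n - 1)) else 0 := by
  rw [flipP_mul_mul_flipP, submatrix_apply, Shat, of_apply, Fin.val_rev, Fin.val_rev]
  have := i.isLt
  have := j.isLt
  split_ifs <;> first | rfl | omega | (congr 1; omega)

lemma flipP_mul_Shat_mul_flipP_apply_zero {n : ℕ} (hn : 0 < n) {c : ℕ → ℂ} (hc0 : c 0 = 1)
    (i : Fin n) : (flipP n * Shat n c * flipP n) i ⟨0, hn⟩ = if (i : ℕ) = n - 1 then 1 else 0 := by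
  rw [flipP_mul_Shat_mul_flipP_apply, add_zero]
  split_ifs <;> first | omega | simp [*]

lemma isSymm_flipP_mul_Shat_mul_flipP (n : ℕ) (c : ℕ → ℂ) :
    (flipP n * Shat n c * flipP n).IsSymm := by
  ext i j
  simp only [transpose_apply, flipP_mul_Shat_mul_flipP_apply, add_comm (i : ℕ)]

lemma mul_shiftJ_apply {n : ℕ} (M : Matrix (Fin n) (Fin n) ℂ) (i j : Fin n) :
    (M * shiftJ n) i j = if h : (j : ℕ) + 1 < n then M i ⟨j + 1, h⟩ else 0 := by
  simp only [mul_apply, shiftJ, of_apply, mul_ite, mul_one, mul_zero]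
  split_ifs with h
  · rw [Fintype.sum_eq_single ⟨j + 1, h⟩ fun k hk => if_neg fun e => hk (Fin.ext e)]
    exact if_pos rfl
  · exact Finset.sum_eq_zero fun k _ => if_neg (by omega)

lemma mul_firstRow_apply {n : ℕ} (hn : 0 < n) (M : Matrix (Fin n) (Fin n) ℂ) (v : Fin n → ℂ)
    (i j : Fin n) :
    (M * of fun k l : Fin n => if (k : ℕ) = 0 then v l else 0) i j = M i ⟨0, hn⟩ * v j := by
  simp only [mul_apply, of_apply, mul_ite, mul_zero]
  rw [Fintype.sum_eq_single ⟨0, hn⟩ fun k hk => if_neg fun e => hk (Fin.ext e)]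
  exact if_pos rfl

def shiftedHankel (n : ℕ) (c : ℕ → ℂ) : Matrix (Fin n) (Fin n) ℂ :=
  of fun i j : Fin n =>
    if (i : ℕ) < n - 1 ∧ (j : ℕ) < n - 1 then
      (if n ≤ (i : ℕ) + (j : ℕ) + 2 then c ((i : ℕ) + (j : ℕ) + 2 - n) else 0)
    else if (i : ℕ) = n - 1 ∧ (j : ℕ) = n - 1 then -c n
    else 0

lemma isSymm_shiftedHankel (n : ℕ) (c : ℕ → ℂ) : (shiftedHankel n c).IsSymm := by
  ext i j
  simp only [shiftedHankel, transpose_apply, of_apply, and_comm, add_comm (j : ℕ)]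

lemma flipP_mul_Shat_mul_flipP_mul_shiftJ_sub {n : ℕ} (hn : 0 < n) {c : ℕ → ℂ} (hc0 : c 0 = 1) :
    flipP n * Shat n c * flipP n *
        (shiftJ n - of fun i j : Fin n => if (i : ℕ) = 0 then c ((j : ℕ) + 1) else 0) =
      shiftedHankel n c := by
  ext i j
  rw [mul_sub, Matrix.sub_apply, mul_shiftJ_apply, mul_firstRow_apply hn,
    flipP_mul_Shat_mul_flipP_apply_zero hn hc0, shiftedHankel, of_apply]
  obtain hi | hi : (i : ℕ) < n - 1 ∨ (i : ℕ) = n - 1 := by omega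
  all_goals obtain hj | hj : (j : ℕ) < n - 1 ∨ (j : ℕ) = n - 1 := by omega
  · rw [dif_pos (by omega), if_neg hi.ne, if_pos ⟨hi, hj⟩, zero_mul, sub_zero]
    simp only [flipP_mul_Shat_mul_flipP_apply]
    split_ifs <;> first | rfl | omega | (congr 1; omega)
  · rw [dif_neg (by omega), if_neg hi.ne, if_neg (by omega), if_neg (by omega), zero_mul, sub_zero]
  · rw [dif_pos (by omega), if_pos hi, if_neg (by omega), if_neg (by omega), one_mul]
    simp only [flipP_mul_Shat_mul_flipP_apply]
    rw [if_pos (by omega), sub_eq_zero]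
    congr 1
    omega
  · rw [dif_neg (by omega), if_pos hi, if_neg (by omega), if_pos ⟨hi, hj⟩, one_mul, zero_sub]
    congr 2
    omega

/-- `P S(ĉ) P (J - e cᵀ) = (P J P - c eᵀ) P S(ĉ) P`, and both equal the matrix whose
top-left `(n-1)×(n-1)` corner is the Hankel pattern `c_{i+j-n}` (1-based; `c₀ = 1`,
`c_k = 0` for `k < 0`), whose last row and column vanish except for the `(n,n)`-entry
`-c_n`. -/
theorem PSP_shift_identity (n : ℕ) (hn : 0 < n) (c : ℕ → ℂ) (hc0 : c 0 = 1) :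
    flipP n * Shat n c * flipP n *
        (shiftJ n - Matrix.of fun i j : Fin n =>
          if (i : ℕ) = 0 then c ((j : ℕ) + 1) else 0)
      = (flipP n * shiftJ n * flipP n - Matrix.of fun i j : Fin n =>
          if (j : ℕ) = 0 then c ((i : ℕ) + 1) else 0) *
        (flipP n * Shat n c * flipP n) ∧
    flipP n * Shat n c * flipP n *
        (shiftJ n - Matrix.of fun i j : Fin n =>
          if (i : ℕ) = 0 then c ((j : ℕ) + 1) else 0)
      = Matrix.of fun i j : Fin n =>
          if (i : ℕ) < n - 1 ∧ (j : ℕ) < n - 1 then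
            (if n ≤ (i : ℕ) + (j : ℕ) + 2 then c ((i : ℕ) + (j : ℕ) + 2 - n) else 0)
          else if (i : ℕ) = n - 1 ∧ (j : ℕ) = n - 1 then -c n
          else 0 := by
  set A := flipP n * Shat n c * flipP n
  set E : Matrix (Fin n) (Fin n) ℂ := of fun i j => if (i : ℕ) = 0 then c ((j : ℕ) + 1) else 0
  have hM : A * (shiftJ n - E) = shiftedHankel n c := flipP_mul_Shat_mul_flipP_mul_shiftJ_sub hn hc0
  refine ⟨?_, hM⟩
  calc A * (shiftJ n - E) = (A * (shiftJ n - E))ᵀ := by rw [hM, (isSymm_shiftedHankel n c).eq]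
    _ = ((shiftJ n)ᵀ - Eᵀ) * A := by
      rw [transpose_mul, transpose_sub, (isSymm_flipP_mul_Shat_mul_flipP n c).eq]
    _ = _ := by rw [flipP_mul_shiftJ_mul_flipP]; rfl
end
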